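/- arXiv:1111.4767 — 4 statements merged into one kernel-verified Lean document; each statement's English description precedes it below -/
import Mathlib

section
/- In the setting of the equations ṡ = v cos α/(1+κd), ḋ = −v sin α, α̇ = −κṡ + u with |u| ≤ v/R, suppose 1 + κd > 0, d > R, and additionally if κ < 0 then 1/|κ| > d + R. Then when α → 0 with cos α → sgn(ṡ) and u = (v/R) sgn(ṡ) one has d̈ → −v²(1 + κd − κR)/(R(1+κd)) < 0, while when u = −(v/R) sgn(ṡ) one has d̈ → v²(1 + κd + κR)/(R(1+κd)) > 0; consequently the surface ḋ = 0 is a sliding surface for the switching control law u = (v/R)·sgn(ṡ) for ḋ > 0 and u = −(v/R)·sgn(ṡ) for ḋ < 0. -/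
/-!
In the limit ḋ → 0 the acceleration is d̈ = −v²((u/v)·ε − κ/(1+κd)) with ε = sgn(ṡ), so ε² = 1 and
the extreme controls u = ±(v/R)·ε give d̈ = ∓v²(1 + κd ∓ κR)/(R(1+κd)). Both numerators
1 + κd ∓ κR are positive: for κ ≥ 0 this comes from d > R, resp. κR ≥ 0, and for κ < 0 from
1 + κd > 0, resp. |κ|(d + R) < 1.
-/

noncomputable def distAccelLimit (v u ε κ d : ℝ) : ℝ :=
  -(v ^ 2) * (u / v * ε - κ / (1 + κ * d))

section

variable {v R κ d ε : ℝ}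

theorem distAccelLimit_turn_eq (hv : v ≠ 0) (hR : R ≠ 0) (h1 : 1 + κ * d ≠ 0)
    (hε : ε * ε = 1) :
    distAccelLimit v (v / R * ε) ε κ d = -(v ^ 2) * (1 + κ * d - κ * R) / (R * (1 + κ * d)) := by
  unfold distAccelLimit
  rw [div_mul_eq_mul_div, mul_assoc, hε]
  field_simp

theorem distAccelLimit_neg_turn_eq (hv : v ≠ 0) (hR : R ≠ 0) (h1 : 1 + κ * d ≠ 0)
    (hε : ε * ε = 1) :
    distAccelLimit v (-(v / R) * ε) ε κ d = v ^ 2 * (1 + κ * d + κ * R) / (R * (1 + κ * d)) := by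
  unfold distAccelLimit
  rw [div_mul_eq_mul_div, mul_assoc, hε]
  field_simp
  ring

theorem one_add_mul_sub_mul_pos (h1 : 0 < 1 + κ * d) (hR : 0 ≤ R) (hRd : R ≤ d) :
    0 < 1 + κ * d - κ * R := by
  rcases le_or_gt 0 κ with hκ | hκ
  · nlinarith
  · nlinarith

theorem one_add_mul_add_mul_pos (h1 : 0 < 1 + κ * d) (hR : 0 ≤ R)
    (hκ : κ < 0 → d + R < 1 / |κ|) :
    0 < 1 + κ * d + κ * R := by
  rcases le_or_gt 0 κ with hκ₀ | hκ₀
  · nlinarith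
  · have h := hκ hκ₀
    rw [abs_of_neg hκ₀, lt_div_iff₀ (neg_pos.mpr hκ₀)] at h
    linarith

end

/-- In the setting d̈ = −v²[(u/v)·sgn(ṡ) − κ/(1+κd)] with |u| ≤ v/R,
1 + κd > 0, d > R, and 1/|κ| > d + R when κ < 0 (ε = sgn(ṡ) = ±1): with
u = (v/R)·ε (the side ḋ > 0) one gets d̈ = −v²(1+κd−κR)/(R(1+κd)) < 0, and with
u = −(v/R)·ε (the side ḋ < 0) one gets d̈ = v²(1+κd+κR)/(R(1+κd)) > 0; hence the
surface ḋ = 0 is sliding for the switching law. -/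
theorem stmt_6
    (v R κ d ε : ℝ) (hv : 0 < v) (hR : 0 < R)
    (hε : ε = 1 ∨ ε = -1)
    (h1 : 0 < 1 + κ * d) (hdR : R < d)
    (hκ : κ < 0 → d + R < 1 / |κ|) :
    (-(v ^ 2) * ((v / R * ε) / v * ε - κ / (1 + κ * d)) =
        -(v ^ 2) * (1 + κ * d - κ * R) / (R * (1 + κ * d)) ∧
      -(v ^ 2) * (1 + κ * d - κ * R) / (R * (1 + κ * d)) < 0) ∧
    (-(v ^ 2) * ((-(v / R) * ε) / v * ε - κ / (1 + κ * d)) =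
        v ^ 2 * (1 + κ * d + κ * R) / (R * (1 + κ * d)) ∧
      0 < v ^ 2 * (1 + κ * d + κ * R) / (R * (1 + κ * d))) := by
  have hεε : ε * ε = 1 := by rcases hε with rfl | rfl <;> norm_num
  have hv2 : 0 < v ^ 2 := pow_pos hv 2
  have hden : 0 < R * (1 + κ * d) := mul_pos hR h1
  have hminus := one_add_mul_sub_mul_pos h1 hR.le hdR.le
  have hplus := one_add_mul_add_mul_pos h1 hR.le hκ
  refine ⟨⟨distAccelLimit_turn_eq hv.ne' hR.ne' h1.ne' hεε, ?_⟩,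
    ⟨distAccelLimit_neg_turn_eq hv.ne' hR.ne' h1.ne' hεε, ?_⟩⟩
  · exact div_neg_of_neg_of_pos (mul_neg_of_neg_of_pos (neg_neg_of_pos hv2) hminus) hden
  · exact div_pos (mul_pos hv2 hplus) hden
end

section
/- Consider the sliding-surface analysis: in the region where the vehicle moves with d ≤ d_trig and ḋ > 0, or d > d_trig, under the control law u = ū·sgn(β), the surface β = 0 is a sliding surface with equivalent control u ≡ 0; that is, as the state approaches β = 0 from either side, β̇ → −ū·sgn(β), so trajectories from both sides point toward the surface β = 0. -/
open Filter Topology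

namespace Real

lemma sign_mul_sub_mul_sign {β : ℝ} (hβ : β ≠ 0) (a c : ℝ) :
    sign β * (a - c * sign β) = sign β * a - c := by
  rcases sign_apply_eq_of_ne_zero β hβ with h | h <;> rw [h] <;> ring

section SlidingSurface

variable {g : ℝ → ℝ} (hg : Tendsto g (𝓝 0) (𝓝 0)) (c : ℝ)
include hg

lemma tendsto_sub_mul_sign_nhdsGT : Tendsto (fun β => g β - c * sign β) (𝓝[>] 0) (𝓝 (-c)) := by
  have hlim : Tendsto (fun β => g β - c) (𝓝[>] 0) (𝓝 (0 - c)) :=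
    (hg.mono_left nhdsWithin_le_nhds).sub tendsto_const_nhds
  rw [zero_sub] at hlim
  refine hlim.congr' ?_
  filter_upwards [self_mem_nhdsWithin] with β (hβ : 0 < β)
  rw [sign_of_pos hβ, mul_one]

lemma tendsto_sub_mul_sign_nhdsLT : Tendsto (fun β => g β - c * sign β) (𝓝[<] 0) (𝓝 c) := by
  have hlim : Tendsto (fun β => g β + c) (𝓝[<] 0) (𝓝 (0 + c)) :=
    (hg.mono_left nhdsWithin_le_nhds).add tendsto_const_nhds
  rw [zero_add] at hlim
  refine hlim.congr' ?_
  filter_upwards [self_mem_nhdsWithin] with β (hβ : β < 0)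
  rw [sign_of_neg hβ]
  ring

/-- Once the drift `g` is smaller than the control bound `c`, the switching term dominates. -/
lemma eventually_sign_mul_sub_mul_sign_neg {c : ℝ} (hc : 0 < c) :
    ∀ᶠ β in 𝓝 0, β ≠ 0 → sign β * (g β - c * sign β) < 0 := by
  have hsmall : ∀ᶠ β in 𝓝 0, |g β| < c :=
    hg.abs.eventually (gt_mem_nhds (by rwa [abs_zero]))
  filter_upwards [hsmall] with β hβ hβ0
  have := abs_lt.1 hβ
  rw [sign_mul_sub_mul_sign hβ0]
  rcases sign_apply_eq_of_ne_zero β hβ0 with h | h <;> rw [h] <;> linarith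

end SlidingSurface

end Real

theorem stmt_12_general
    (v ubar h : ℝ) (hu : 0 < ubar) :
    Tendsto (fun β : ℝ => v / h * Real.sin β - ubar * Real.sign β)
      (nhdsWithin 0 (Set.Ioi 0)) (nhds (-ubar)) ∧
    Tendsto (fun β : ℝ => v / h * Real.sin β - ubar * Real.sign β)
      (nhdsWithin 0 (Set.Iio 0)) (nhds ubar) ∧
    (∃ δ > 0, ∀ β : ℝ, β ≠ 0 → |β| < δ →
      Real.sign β * (v / h * Real.sin β - ubar * Real.sign β) < 0) ∧
    v / h * Real.sin 0 = 0 := by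
  have hdrift : Tendsto (fun β => v / h * Real.sin β) (𝓝 0) (𝓝 0) := by
    simpa using (Real.continuous_sin.tendsto 0).const_mul (v / h)
  obtain ⟨δ, hδ, hpoint⟩ :=
    Metric.eventually_nhds_iff.1 (Real.eventually_sign_mul_sub_mul_sign_neg hdrift hu)
  refine ⟨Real.tendsto_sub_mul_sign_nhdsGT hdrift ubar,
    Real.tendsto_sub_mul_sign_nhdsLT hdrift ubar, ⟨δ, hδ, fun β hβ hβδ => ?_⟩, by simp⟩
  exact hpoint (by rwa [Real.dist_0_eq_abs]) hβ

/-- For the bearing dynamics β̇ = (v/h) sin β − ū·sgn β (control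
u = ū·sgn β, h > 0 the distance to the target), the surface β = 0 is sliding: as
β → 0⁺ one has β̇ → −ū, as β → 0⁻ one has β̇ → ū, near β = 0 the vector field
points toward the surface from both sides, and the equivalent control keeping
β ≡ 0 is u = (v/h)·sin 0 = 0. -/
theorem stmt_12
    (v ubar h : ℝ) (hv : 0 < v) (hu : 0 < ubar) (hh : 0 < h) :
    Tendsto (fun β : ℝ => v / h * Real.sin β - ubar * Real.sign β)
      (nhdsWithin 0 (Set.Ioi 0)) (nhds (-ubar)) ∧
    Tendsto (fun β : ℝ => v / h * Real.sin β - ubar * Real.sign β)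
      (nhdsWithin 0 (Set.Iio 0)) (nhds ubar) ∧
    (∃ δ > 0, ∀ β : ℝ, β ≠ 0 → |β| < δ →
      Real.sign β * (v / h * Real.sin β - ubar * Real.sign β) < 0) ∧
    v / h * Real.sin 0 = 0 :=
  stmt_12_general v ubar h hu
end

section
/- Let D be a planar obstacle satisfying: the safety margin satisfies d_safe > R, the triggering distance satisfies d_safe + 2R < d_trig, and for concave boundary points the curvature radius satisfies R_κ > R + d_trig. Then along any trajectory of the unicycle with turning radius bound R in the region d ≤ d_trig, under constant control u = −ū the angle α satisfies α̇ ≤ −δ < 0 for some δ > 0; i.e., the velocity direction rotates clockwise at a rate bounded away from zero. -/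
/-!
Under `u = -ū` the heading rotates at rate `α̇ = v (-κ cos α / (1 + κ d) - 1/R)`, so it suffices to
bound the curvature drift `-κ cos α / (1 + κ d)` uniformly below `1/R`. Where the boundary is
convex (`κ ≥ 0`) the drift is at most `κ / (1 + κ d) ≤ 1/d ≤ 1/d_safe < 1/R`. Where it is concave,
`-κ ≤ m` for the largest concave curvature `m`, which exists because `κ` is continuous and periodic
and satisfies `m (R + d_trig) < 1` by the curvature-radius hypothesis; then the drift is at most `m / (1 - m d_trig) < 1/R`.
-/

open Function

theorem Function.Periodic.exists_forall_le_of_continuous {α : Type*} [LinearOrder α]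
    [TopologicalSpace α] [ClosedIciTopology α] {f : ℝ → α} {c : ℝ} (hp : Periodic f c)
    (hc : c ≠ 0) (hf : Continuous f) : ∃ x, ∀ y, f y ≤ f x := by
  obtain ⟨_, ⟨x, rfl⟩, hx⟩ :=
    (hp.compact_of_continuous hc hf).exists_isGreatest (Set.range_nonempty f)
  exact ⟨x, fun y => hx ⟨y, rfl⟩⟩

theorem exists_concave_curvature_bound {κ : ℝ → ℝ} {L r : ℝ} (hκ : Continuous κ) (hL : L ≠ 0)
    (hper : Periodic κ L) (hconc : ∀ σ, κ σ < 0 → r < 1 / |κ σ|) :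
    ∃ m, 0 ≤ m ∧ (∀ σ, -κ σ ≤ m) ∧ m * r < 1 := by
  obtain ⟨σ₀, hσ₀⟩ := (hper.comp Neg.neg).exists_forall_le_of_continuous hL hκ.neg
  refine ⟨max (-κ σ₀) 0, le_max_right _ _, fun σ => (hσ₀ σ).trans (le_max_left _ _), ?_⟩
  rcases lt_or_ge (κ σ₀) 0 with hneg | hnonneg
  · have hr := hconc σ₀ hneg
    rw [abs_of_neg hneg, lt_div_iff₀' (neg_pos.mpr hneg)] at hr
    rwa [max_eq_left (neg_nonneg.mpr hneg.le)]
  · simp [hnonneg]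

theorem curvature_drift_le_of_nonneg {k c d ds : ℝ} (hk : 0 ≤ k) (hc : |c| ≤ 1) (hds : 0 < ds)
    (hd : ds ≤ d) : -k * c / (1 + k * d) ≤ 1 / ds := by
  have hden : 0 < 1 + k * d := by nlinarith
  have hnum : -k * c ≤ k := by nlinarith [neg_abs_le c]
  calc -k * c / (1 + k * d) ≤ k / (1 + k * d) := by gcongr
    _ ≤ 1 / ds := by
      rw [div_le_div_iff₀ hden hds]
      nlinarith

theorem curvature_drift_le_of_nonpos {k c d dt m : ℝ} (hk : k ≤ 0) (hkm : -k ≤ m) (hc : |c| ≤ 1)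
    (hd₀ : 0 ≤ d) (hd : d ≤ dt) (hm : m * dt < 1) :
    -k * c / (1 + k * d) ≤ m / (1 - m * dt) := by
  have hden : 1 - m * dt ≤ 1 + k * d := by nlinarith
  have hnum : -k * c ≤ m := by nlinarith [le_abs_self c]
  exact div_le_div₀ (by linarith) hnum (by linarith) hden

theorem curvature_drift_le_max {k c d ds dt m : ℝ} (hkm : -k ≤ m) (hc : |c| ≤ 1)
    (hds : 0 < ds) (hd₁ : ds ≤ d) (hd₂ : d ≤ dt) (hm : m * dt < 1) :
    -k * c / (1 + k * d) ≤ max (1 / ds) (m / (1 - m * dt)) := by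
  rcases le_total 0 k with hk | hk
  · exact (curvature_drift_le_of_nonneg hk hc hds hd₁).trans (le_max_left _ _)
  · exact (curvature_drift_le_of_nonpos hk hkm hc (hds.le.trans hd₁) hd₂ hm).trans
      (le_max_right _ _)

theorem stmt_14_general
    (v R dsafe dtrig L : ℝ) (κ : ℝ → ℝ)
    (hv : 0 < v) (hR : 0 < R)
    (hsafe : R < dsafe)
    (hκc : Continuous κ) (hL : 0 < L) (hper : ∀ σ, κ (σ + L) = κ σ)
    (hconc : ∀ σ, κ σ < 0 → R + dtrig < 1 / |κ σ|) :
    ∃ δ > 0, ∀ σ d α : ℝ, dsafe ≤ d → d ≤ dtrig → 0 < 1 + κ σ * d →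
      -(κ σ) * (v * Real.cos α / (1 + κ σ * d)) + -(v / R) ≤ -δ := by
  obtain ⟨m, hm₀, hκm, hm⟩ := exists_concave_curvature_bound hκc hL.ne' hper hconc
  have hmdt : m * dtrig < 1 := by nlinarith
  have hconvex : 1 / dsafe < 1 / R := one_div_lt_one_div_of_lt hR hsafe
  have hconcave : m / (1 - m * dtrig) < 1 / R := by
    rw [div_lt_div_iff₀ (by linarith) hR]
    linarith
  refine ⟨v * (1 / R - max (1 / dsafe) (m / (1 - m * dtrig))),
    mul_pos hv (sub_pos.mpr (max_lt hconvex hconcave)), fun σ d α hd₁ hd₂ _ => ?_⟩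
  have hdrift := curvature_drift_le_max (hκm σ) (Real.abs_cos_le_one α)
    (hR.trans hsafe) hd₁ hd₂ hmdt
  calc -(κ σ) * (v * Real.cos α / (1 + κ σ * d)) + -(v / R)
      = v * (-κ σ * Real.cos α / (1 + κ σ * d) - 1 / R) := by ring
    _ ≤ v * (max (1 / dsafe) (m / (1 - m * dtrig)) - 1 / R) := by gcongr
    _ = -(v * (1 / R - max (1 / dsafe) (m / (1 - m * dtrig)))) := by ring

/-- For a unicycle with turning-radius bound R (ū = v/R) near an
obstacle whose boundary curvature κ is continuous and L-periodic, with
d_safe > R, d_safe + 2R < d_trig, and curvature radius 1/|κ| > R + d_trig at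
every concave point (κ < 0), under the constant control u = −ū and in the region
d_safe ≤ d ≤ d_trig (with 1 + κd > 0) the angle α satisfies
α̇ = −κ·ṡ − v/R ≤ −δ < 0 for some uniform δ > 0. -/
theorem stmt_14
    (v R dsafe dtrig L : ℝ) (κ : ℝ → ℝ)
    (hv : 0 < v) (hR : 0 < R)
    (hsafe : R < dsafe) (htrig : dsafe + 2 * R < dtrig)
    (hκc : Continuous κ) (hL : 0 < L) (hper : ∀ σ, κ (σ + L) = κ σ)
    (hconc : ∀ σ, κ σ < 0 → R + dtrig < 1 / |κ σ|) :
    ∃ δ > 0, ∀ σ d α : ℝ, dsafe ≤ d → d ≤ dtrig → 0 < 1 + κ σ * d →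
      -(κ σ) * (v * Real.cos α / (1 + κ σ * d)) + -(v / R) ≤ -δ :=
  stmt_14_general v R dsafe dtrig L κ hv hR hsafe hκc hL hper hconc
end

section
/- Let D be a compact planar domain and d_trig > 0 less than the regular margin of D. Define a location r (with dist(r, ∂-neighborhood) conditions) to be 'locked' if it belongs to a simple cave of the d_trig-neighborhood N(d_trig) of D whose two endpoints lie on a common ray emanating from the target T. Then every point r with dist_{co D}(r) > d_trig (distance to the convex hull of D exceeding d_trig) is unlocked. -/
/-!
Each boundary point of a simple cave lies either on `C(d_trig)` or on the chord joining two
points of `C(d_trig)`, so the whole frontier lies in the closed convex set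
`cthickening d_trig (co D)`. A compact set whose frontier lies in a closed convex set lies in
it, so the cave stays within `d_trig` of `co D`.
-/

open Metric

/-- A simple cave of the d_trig-neighborhood of the obstacle `D` with endpoints
`r₁, r₂` on the equidistant curve `C(d_trig)`: the open segment between the
endpoints stays strictly outside the neighborhood, and the cave `S` is a compact
region bounded by a piece of the equidistant curve and that segment. -/
def IsSimpleCave (D : Set (EuclideanSpace ℝ (Fin 2))) (dtrig : ℝ)
    (r₁ r₂ : EuclideanSpace ℝ (Fin 2)) (S : Set (EuclideanSpace ℝ (Fin 2))) : Prop :=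
  infDist r₁ D = dtrig ∧ infDist r₂ D = dtrig ∧
  (∀ x ∈ segment ℝ r₁ r₂, x ≠ r₁ → x ≠ r₂ → dtrig < infDist x D) ∧
  IsCompact S ∧ S.Nonempty ∧
  frontier S ⊆ {x | infDist x D = dtrig} ∪ segment ℝ r₁ r₂

/-- A location `r` is locked (w.r.t. target `Tgt`) if it lies in a simple cave of
the d_trig-neighborhood of `D` whose endpoints lie on a common ray emanating
from the target. -/
def IsLocked (D : Set (EuclideanSpace ℝ (Fin 2))) (dtrig : ℝ)
    (Tgt r : EuclideanSpace ℝ (Fin 2)) : Prop :=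
  ∃ r₁ r₂ S, IsSimpleCave D dtrig r₁ r₂ S ∧
    SameRay ℝ (r₁ - Tgt) (r₂ - Tgt) ∧ r ∈ S

theorem Metric.mem_cthickening_iff_infDist_le {X : Type*} [PseudoMetricSpace X]
    {E : Set X} {x : X} {δ : ℝ} (hE : E.Nonempty) (hδ : 0 ≤ δ) :
    x ∈ cthickening δ E ↔ infDist x E ≤ δ := by
  rw [mem_cthickening_iff, infDist,
    ← ENNReal.le_ofReal_iff_toReal_le (infEDist_ne_top hE) hδ]

/-- A functional separating a point of `S \ K` from `K` attains its maximum over `S` at a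
point that is not interior (a nonzero linear map has no local maximum), hence lies in `K`. -/
theorem IsCompact.subset_of_frontier_subset {E : Type*} [NormedAddCommGroup E]
    [NormedSpace ℝ E] {S K : Set E} (hS : IsCompact S) (hKconv : Convex ℝ K)
    (hKclosed : IsClosed K) (hKne : K.Nonempty) (hfr : frontier S ⊆ K) : S ⊆ K := by
  intro x hxS
  by_contra hxK
  obtain ⟨φ, u, hφK, hux⟩ := geometric_hahn_banach_closed_point hKconv hKclosed hxK
  obtain ⟨p, hpS, hmax⟩ := hS.exists_isMaxOn ⟨x, hxS⟩ φ.continuous.continuousOn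
  obtain ⟨k, hk⟩ := hKne
  have hp_not_interior : p ∉ interior S := fun hp => by
    have hφ : φ = 0 := by
      simpa only [φ.fderiv] using
        (hmax.isLocalMax (mem_interior_iff_mem_nhds.1 hp)).fderiv_eq_zero
    have := hφK k hk
    simp only [hφ, zero_apply] at this hux
    linarith
  have hpK : p ∈ K := hfr ⟨subset_closure hpS, hp_not_interior⟩
  linarith [hφK p hpK, isMaxOn_iff.1 hmax x hxS]

theorem stmt_19_general
    (D : Set (EuclideanSpace ℝ (Fin 2))) (hDne : D.Nonempty)
    (dtrig : ℝ)
    (Tgt r : EuclideanSpace ℝ (Fin 2))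
    (hr : dtrig < infDist r (convexHull ℝ D)) :
    ¬ IsLocked D dtrig Tgt r := by
  rintro ⟨r₁, r₂, S, ⟨h₁, h₂, -, hS, -, hfr⟩, -, hrS⟩
  have hdtrig : 0 ≤ dtrig := h₁ ▸ infDist_nonneg
  have hCne : (convexHull ℝ D).Nonempty := hDne.convexHull
  set K := cthickening dtrig (convexHull ℝ D)
  have hKconv : Convex ℝ K := (convex_convexHull ℝ D).cthickening dtrig
  have mem_K : ∀ x, infDist x D = dtrig → x ∈ K := fun x hx =>
    (mem_cthickening_iff_infDist_le hCne hdtrig).2 <|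
      (infDist_le_infDist_of_subset (subset_convexHull ℝ D) hDne).trans hx.le
  have hfrK : frontier S ⊆ K := fun x hx =>
    (hfr hx).elim (mem_K x) fun hx => hKconv.segment_subset (mem_K _ h₁) (mem_K _ h₂) hx
  have hrK : r ∈ K :=
    hS.subset_of_frontier_subset hKconv isClosed_cthickening ⟨r₁, mem_K _ h₁⟩ hfrK hrS
  exact hr.not_ge ((mem_cthickening_iff_infDist_le hCne hdtrig).1 hrK)

/-- For a compact planar obstacle D and 0 < d_trig below the
regular margin of D, every point whose distance to the convex hull of D exceeds
d_trig is unlocked. -/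
theorem stmt_19
    (D : Set (EuclideanSpace ℝ (Fin 2))) (hD : IsCompact D) (hDne : D.Nonempty)
    (dtrig dstar : ℝ) (hdtrig : 0 < dtrig) (hmarg : dtrig < dstar)
    (hregular : ∀ x ∉ D, infDist x D < dstar →
      ∃! y, y ∈ frontier D ∧ dist x y = infDist x D)
    (Tgt r : EuclideanSpace ℝ (Fin 2))
    (hr : dtrig < infDist r (convexHull ℝ D)) :
    ¬ IsLocked D dtrig Tgt r :=
  stmt_19_general D hDne dtrig Tgt r hr
end
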